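/- Let N ∈ ℕ with N ≥ 2, J > 0, h = 0, ρ > 0, and ε, ε' ∈ (−ρJ/2, 0]. Then: (i) if ε ≠ 0, w₂(μ_MC^{ε,ρ;N}, μ_MC^{ε',ρ;N}; N) ≤ (2/J) · (1 / ( √(−2ε/J) · √(1 − (−2ε/(Jρ))) )) · |ε − ε'|; and (ii) if ε = 0, w₂(μ_MC^{0,ρ;N}, μ_MC^{ε',ρ;N}; N) ≤ (2/√J) · |ε'|^{1/2}. -/

import Mathlib

open MeasureTheory ProbabilityTheory Matrix

/-- The specific `p`-norm fluctuation distance `w_p(μ₁, μ₂; N)`: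
the infimum over all couplings `γ` of `μ₁` and `μ₂` of
`∫ (1/N) ∑ᵢ |xᵢ - yᵢ|^p dγ`, raised to the power `1/p`. -/
noncomputable def fluctDist (p : ℝ) (N : ℕ) (μ₁ μ₂ : Measure (Fin N → ℝ)) : ℝ :=
  sInf {c : ℝ | ∃ γ : Measure ((Fin N → ℝ) × (Fin N → ℝ)), IsProbabilityMeasure γ ∧
      γ.map Prod.fst = μ₁ ∧ γ.map Prod.snd = μ₂ ∧
      c = ∫ xy, (N : ℝ)⁻¹ * ∑ i, |xy.1 i - xy.2 i| ^ p ∂γ} ^ (1 / p)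

/-- The standard Gaussian measure on `ℝ^N`. -/
noncomputable def stdGaussian (N : ℕ) : Measure (Fin N → ℝ) :=
  Measure.pi fun _ => gaussianReal 0 1

/-- `U` is an orthogonal matrix such that the first coordinate of `U x` is
`N^{-1/2} ∑ᵢ xᵢ`. -/
def GoodRotation {N : ℕ} (hN : 0 < N) (U : Matrix (Fin N) (Fin N) ℝ) : Prop :=
  Uᵀ * U = 1 ∧ ∀ x : Fin N → ℝ, U.mulVec x ⟨0, hN⟩ = (∑ i, x i) / Real.sqrt N

/-- The auxiliary microcanonical ensemble `μ_MC^{m,ρ;N}` with magnetization density `m` and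
particle density `ρ`: the pushforward under `U⁻¹` of the product of the Dirac mass at `m √N`
in the first coordinate with the uniform probability measure on the sphere of radius
`√(N(ρ − m²))` in the remaining `N − 1` coordinates.  The uniform sphere measure is realized
as the pushforward of the standard Gaussian on the remaining coordinates under radial
normalization. -/
noncomputable def mcSpherical {N : ℕ} (hN : 0 < N) (U : Matrix (Fin N) (Fin N) ℝ)
    (m ρ : ℝ) : Measure (Fin N → ℝ) :=
  (stdGaussian N).map fun x =>
    U⁻¹.mulVec fun i =>
      if i = ⟨0, hN⟩ then m * Real.sqrt N
      else Real.sqrt (N * (ρ - m ^ 2)) * x i /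
        Real.sqrt (∑ j ∈ Finset.univ.filter (fun j => j ≠ (⟨0, hN⟩ : Fin N)), x j ^ 2)

-- The microcanonical energy ensemble `μ_MC^{ε,ρ;N}` at `h = 0`: for `ε ∈ (−ρJ/2, 0)` it is
-- the even mixture `(1/2) μ_MC^{m₊,ρ;N} + (1/2) μ_MC^{m₋,ρ;N}` with `m_± = ±√(−2ε/J)`,
-- and for `ε = 0` it is `μ_MC^{0,ρ;N}`.
open Classical in
noncomputable def mcEnergyZero {N : ℕ} (hN : 0 < N) (U : Matrix (Fin N) (Fin N) ℝ)
    (J ρ ε : ℝ) : Measure (Fin N → ℝ) :=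
  if ε = 0 then mcSpherical hN U 0 ρ
  else
    ((1 : ENNReal) / 2) • mcSpherical hN U (Real.sqrt (-2 * ε / J)) ρ +
      ((1 : ENNReal) / 2) • mcSpherical hN U (-Real.sqrt (-2 * ε / J)) ρ

/-!
Couple `μ_MC^{m,ρ;N}` and `μ_MC^{m',ρ;N}` synchronously, i.e. build both from the same
Gaussian sample. Since `U` is orthogonal, the normalized squared distance between the two
points is then almost surely the constant `(m - m')² + (√(ρ - m²) - √(ρ - m'²))²`; the
energy ensembles are coupled component by component (`m₊` with `m'₊`, `m₋` with `m'₋`).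
With `a = m² = -2ε/J`, the elementary bound `(√a - √b)² ≤ (a - b)² / a` turns this constant
into the claimed Lipschitz bound in `ε`, and `(√a - √b)² ≤ a - b` gives the `ε = 0` case.
-/

open scoped ENNReal

namespace MicrocanonicalCoupling

noncomputable def fluctCost (p : ℝ) (N : ℕ) (xy : (Fin N → ℝ) × (Fin N → ℝ)) : ℝ :=
  (N : ℝ)⁻¹ * ∑ i, |xy.1 i - xy.2 i| ^ p

theorem fluctDist_le_of_ae_fluctCost_eq {p : ℝ} (hp : 0 ≤ p) {N : ℕ}
    {μ₁ μ₂ : Measure (Fin N → ℝ)} (γ : Measure ((Fin N → ℝ) × (Fin N → ℝ)))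
    [IsProbabilityMeasure γ] (h₁ : γ.map Prod.fst = μ₁) (h₂ : γ.map Prod.snd = μ₂) {C : ℝ}
    (hC : ∀ᵐ xy ∂γ, fluctCost p N xy = C) :
    fluctDist p N μ₁ μ₂ ≤ C ^ (1 / p) := by
  have hγ : ∫ xy, fluctCost p N xy ∂γ = C := by
    rw [integral_congr_ae hC, integral_const, probReal_univ, one_smul]
  have hnonneg : ∀ c ∈ {c : ℝ | ∃ γ : Measure ((Fin N → ℝ) × (Fin N → ℝ)),
      IsProbabilityMeasure γ ∧ γ.map Prod.fst = μ₁ ∧ γ.map Prod.snd = μ₂ ∧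
      c = ∫ xy, fluctCost p N xy ∂γ}, 0 ≤ c := by
    rintro c ⟨γ', -, -, -, rfl⟩
    exact integral_nonneg fun xy => by unfold fluctCost; positivity
  have hmem : ∃ γ' : Measure ((Fin N → ℝ) × (Fin N → ℝ)), IsProbabilityMeasure γ' ∧
      γ'.map Prod.fst = μ₁ ∧ γ'.map Prod.snd = μ₂ ∧ C = ∫ xy, fluctCost p N xy ∂γ' :=
    ⟨γ, inferInstance, h₁, h₂, hγ.symm⟩
  exact Real.rpow_le_rpow (le_csInf ⟨C, hmem⟩ hnonneg) (csInf_le ⟨0, hnonneg⟩ hmem) (by positivity)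

theorem sum_sq_mulVec_of_transpose_mul_self {n : Type*} [Fintype n] [DecidableEq n]
    {A : Matrix n n ℝ} (hA : Aᵀ * A = 1) (z : n → ℝ) :
    ∑ i, (A *ᵥ z) i ^ 2 = ∑ i, z i ^ 2 := by
  have h : A *ᵥ z ⬝ᵥ A *ᵥ z = z ⬝ᵥ z := by
    rw [dotProduct_mulVec, ← mulVec_transpose, mulVec_mulVec, hA, one_mulVec]
  simpa [dotProduct, sq] using h

instance isProbabilityMeasure_stdGaussian (N : ℕ) : IsProbabilityMeasure (stdGaussian N) := by
  unfold _root_.stdGaussian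
  infer_instance

/-- The squared `w₂`-cost of the synchronous coupling of `μ_MC^{m,ρ;N}` and `μ_MC^{m',ρ;N}`. -/
noncomputable def syncCost (m m' ρ : ℝ) : ℝ :=
  (m - m') ^ 2 + (√(ρ - m ^ 2) - √(ρ - m' ^ 2)) ^ 2

theorem syncCost_neg_neg (m m' ρ : ℝ) : syncCost (-m) (-m') ρ = syncCost m m' ρ := by
  rw [syncCost, syncCost, neg_sq, neg_sq, neg_sub_neg, ← neg_sub, neg_sq]

section Spherical

variable {N : ℕ} (hN : 0 < N)

noncomputable def tailSqNorm (x : Fin N → ℝ) : ℝ :=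
  ∑ j ∈ Finset.univ.filter (fun j => j ≠ (⟨0, hN⟩ : Fin N)), x j ^ 2

/-- `mcSpherical hN U m ρ` is the law of `U⁻¹ *ᵥ sphPoint hN m ρ x` for a standard Gaussian `x`. -/
noncomputable def sphPoint (m ρ : ℝ) (x : Fin N → ℝ) : Fin N → ℝ := fun i =>
  if i = ⟨0, hN⟩ then m * √N
  else √(N * (ρ - m ^ 2)) * x i / √(tailSqNorm hN x)

noncomputable def syncCoupling (U : Matrix (Fin N) (Fin N) ℝ) (m m' ρ : ℝ) :
    Measure ((Fin N → ℝ) × (Fin N → ℝ)) :=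
  (stdGaussian N).map fun x => (U⁻¹ *ᵥ sphPoint hN m ρ x, U⁻¹ *ᵥ sphPoint hN m' ρ x)

variable {U : Matrix (Fin N) (Fin N) ℝ} {m m' ρ : ℝ} {x : Fin N → ℝ}

theorem measurable_sphPoint : Measurable (sphPoint hN m ρ) := by
  unfold sphPoint tailSqNorm
  exact measurable_pi_lambda _ fun i => Measurable.ite (.const _) (by fun_prop) (by fun_prop)

theorem ae_tailSqNorm_pos (hN2 : 2 ≤ N) : ∀ᵐ x ∂stdGaussian N, 0 < tailSqNorm hN x := by
  have : NullSingletonClass (gaussianReal 0 1) := nullSingletonClass_gaussianReal one_ne_zero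
  let i₁ : Fin N := ⟨1, hN2⟩
  have hi₁ : i₁ ∈ Finset.univ.filter (fun j => j ≠ (⟨0, hN⟩ : Fin N)) := by simp [i₁, Fin.ext_iff]
  have hnull : stdGaussian N {x | x i₁ = 0} = 0 := Measure.pi_hyperplane _ i₁ 0
  filter_upwards [measure_eq_zero_iff_ae_notMem.1 hnull] with x hx
  calc 0 < x i₁ ^ 2 := sq_pos_of_ne_zero hx
    _ ≤ tailSqNorm hN x := Finset.single_le_sum (fun j _ => sq_nonneg (x j)) hi₁

theorem sum_sq_sphPoint_sub (hx : 0 < tailSqNorm hN x) :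
    ∑ i, (sphPoint hN m ρ x i - sphPoint hN m' ρ x i) ^ 2 = N * syncCost m m' ρ := by
  have hsqrtN : √N ^ 2 = N := Real.sq_sqrt N.cast_nonneg
  have htail : ∀ i ∈ Finset.univ.erase ⟨0, hN⟩,
      (sphPoint hN m ρ x i - sphPoint hN m' ρ x i) ^ 2 =
        N * (√(ρ - m ^ 2) - √(ρ - m' ^ 2)) ^ 2 / tailSqNorm hN x * x i ^ 2 := by
    intro i hi
    have hi₀ : i ≠ ⟨0, hN⟩ := Finset.ne_of_mem_erase hi
    simp only [sphPoint, if_neg hi₀, Real.sqrt_mul N.cast_nonneg]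
    rw [← sub_div, div_pow, Real.sq_sqrt hx.le]
    linear_combination (√(ρ - m ^ 2) - √(ρ - m' ^ 2)) ^ 2 * x i ^ 2 / tailSqNorm hN x * hsqrtN
  rw [← Finset.add_sum_erase _ _ (Finset.mem_univ ⟨0, hN⟩), Finset.sum_congr rfl htail,
    ← Finset.mul_sum, ← Finset.filter_ne', ← tailSqNorm, div_mul_cancel₀ _ hx.ne']
  simp only [sphPoint, syncCost, ↓reduceIte]
  linear_combination (m - m') ^ 2 * hsqrtN

theorem fluctCost_two_mulVec_sphPoint (hU : Uᵀ * U = 1) (hx : 0 < tailSqNorm hN x) :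
    fluctCost 2 N (U⁻¹ *ᵥ sphPoint hN m ρ x, U⁻¹ *ᵥ sphPoint hN m' ρ x) = syncCost m m' ρ := by
  have hUinv : (U⁻¹)ᵀ * U⁻¹ = 1 := by
    rw [inv_eq_left_inv hU, transpose_transpose, mul_eq_one_comm.1 hU]
  have hsum : ∑ i, |(U⁻¹ *ᵥ sphPoint hN m ρ x) i - (U⁻¹ *ᵥ sphPoint hN m' ρ x) i| ^ (2 : ℝ) =
      ∑ i, (sphPoint hN m ρ x - sphPoint hN m' ρ x) i ^ 2 := by
    rw [← sum_sq_mulVec_of_transpose_mul_self hUinv]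
    simp only [Real.rpow_two, sq_abs, mulVec_sub, Pi.sub_apply]
  rw [fluctCost, hsum]
  simp only [Pi.sub_apply]
  rw [sum_sq_sphPoint_sub hN hx]
  field_simp

theorem measurable_mulVec_sphPoint_prod :
    Measurable fun x => (U⁻¹ *ᵥ sphPoint hN m ρ x, U⁻¹ *ᵥ sphPoint hN m' ρ x) :=
  have hU : Measurable fun v : Fin N → ℝ => U⁻¹ *ᵥ v :=
    (continuous_const.matrix_mulVec continuous_id).measurable
  (hU.comp (measurable_sphPoint hN)).prodMk (hU.comp (measurable_sphPoint hN))

instance : IsProbabilityMeasure (syncCoupling hN U m m' ρ) :=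
  Measure.isProbabilityMeasure_map (measurable_mulVec_sphPoint_prod hN).aemeasurable

theorem syncCoupling_map_fst :
    (syncCoupling hN U m m' ρ).map Prod.fst = mcSpherical hN U m ρ := by
  rw [syncCoupling, Measure.map_map measurable_fst (measurable_mulVec_sphPoint_prod hN)]
  rfl

theorem syncCoupling_map_snd :
    (syncCoupling hN U m m' ρ).map Prod.snd = mcSpherical hN U m' ρ := by
  rw [syncCoupling, Measure.map_map measurable_snd (measurable_mulVec_sphPoint_prod hN)]
  rfl

theorem ae_fluctCost_syncCoupling (hN2 : 2 ≤ N) (hU : Uᵀ * U = 1) :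
    ∀ᵐ xy ∂syncCoupling hN U m m' ρ, fluctCost 2 N xy = syncCost m m' ρ := by
  have hcost : Measurable (fluctCost 2 N) := by unfold fluctCost; fun_prop
  rw [syncCoupling, ae_map_iff (measurable_mulVec_sphPoint_prod hN).aemeasurable
    (measurableSet_eq_fun hcost measurable_const)]
  filter_upwards [ae_tailSqNorm_pos hN hN2] with x hx
  exact fluctCost_two_mulVec_sphPoint hN hU hx

end Spherical

theorem fluctDist_mcSpherical_symm_le {N : ℕ} (hN : 0 < N) (hN2 : 2 ≤ N)
    {U : Matrix (Fin N) (Fin N) ℝ} (hU : Uᵀ * U = 1) (m m' ρ : ℝ) :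
    fluctDist 2 N
      ((1 / 2 : ℝ≥0∞) • mcSpherical hN U m ρ + (1 / 2 : ℝ≥0∞) • mcSpherical hN U (-m) ρ)
      ((1 / 2 : ℝ≥0∞) • mcSpherical hN U m' ρ + (1 / 2 : ℝ≥0∞) • mcSpherical hN U (-m') ρ) ≤
    √(syncCost m m' ρ) := by
  let γ := (1 / 2 : ℝ≥0∞) • syncCoupling hN U m m' ρ +
    (1 / 2 : ℝ≥0∞) • syncCoupling hN U (-m) (-m') ρ
  have : IsProbabilityMeasure γ := ⟨by simp [γ, ENNReal.inv_two_add_inv_two]⟩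
  rw [Real.sqrt_eq_rpow]
  refine fluctDist_le_of_ae_fluctCost_eq zero_le_two γ ?_ ?_ ?_
  · rw [Measure.map_add _ _ measurable_fst, Measure.map_smul, Measure.map_smul,
      syncCoupling_map_fst, syncCoupling_map_fst]
  · rw [Measure.map_add _ _ measurable_snd, Measure.map_smul, Measure.map_smul,
      syncCoupling_map_snd, syncCoupling_map_snd]
  · have hneg := ae_fluctCost_syncCoupling hN hN2 hU (m := -m) (m' := -m') (ρ := ρ)
    rw [syncCost_neg_neg] at hneg
    exact ae_add_measure_iff.2 ⟨Measure.ae_smul_measure (ae_fluctCost_syncCoupling hN hN2 hU) _,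
      Measure.ae_smul_measure hneg _⟩

theorem mcEnergyZero_eq {N : ℕ} (hN : 0 < N) (U : Matrix (Fin N) (Fin N) ℝ) (J ρ ε : ℝ) :
    mcEnergyZero hN U J ρ ε =
      (1 / 2 : ℝ≥0∞) • mcSpherical hN U √(-2 * ε / J) ρ +
        (1 / 2 : ℝ≥0∞) • mcSpherical hN U (-√(-2 * ε / J)) ρ := by
  by_cases h : ε = 0
  · simp [mcEnergyZero, h, ← add_smul, ENNReal.inv_two_add_inv_two]
  · rw [mcEnergyZero, if_neg h]

theorem fluctDist_mcEnergyZero_le {N : ℕ} (hN : 0 < N) (hN2 : 2 ≤ N)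
    {U : Matrix (Fin N) (Fin N) ℝ} (hU : GoodRotation hN U) (J ρ ε ε' : ℝ) :
    fluctDist 2 N (mcEnergyZero hN U J ρ ε) (mcEnergyZero hN U J ρ ε') ≤
      √(syncCost √(-2 * ε / J) √(-2 * ε' / J) ρ) := by
  rw [mcEnergyZero_eq, mcEnergyZero_eq]
  exact fluctDist_mcSpherical_symm_le hN hN2 hU.1 _ _ ρ

theorem sq_sqrt_sub_sqrt_le_sub {a b : ℝ} (hb : 0 ≤ b) (hba : b ≤ a) :
    (√a - √b) ^ 2 ≤ a - b := by
  have hsa := Real.sq_sqrt (hb.trans hba)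
  have hsb := Real.sq_sqrt hb
  have hab : √b ≤ √a := Real.sqrt_le_sqrt hba
  nlinarith [Real.sqrt_nonneg b]

theorem sq_sqrt_sub_sqrt_le_div {a b : ℝ} (ha : 0 < a) (hb : 0 ≤ b) :
    (√a - √b) ^ 2 ≤ (a - b) ^ 2 / a := by
  have hsa := Real.sq_sqrt ha.le
  have hsb := Real.sq_sqrt hb
  rw [le_div_iff₀ ha]
  calc (√a - √b) ^ 2 * a ≤ (√a - √b) ^ 2 * (√a + √b) ^ 2 := by
        gcongr
        nlinarith [Real.sqrt_nonneg a, Real.sqrt_nonneg b]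
    _ = (√a ^ 2 - √b ^ 2) ^ 2 := by ring
    _ = (a - b) ^ 2 := by rw [hsa, hsb]

theorem syncCost_sqrt_le {a a' ρ : ℝ} (ha : 0 < a) (haρ : a < ρ) (ha' : 0 ≤ a')
    (ha'ρ : a' ≤ ρ) : syncCost √a √a' ρ ≤ (a - a') ^ 2 / (a * (1 - a / ρ)) := by
  have hρa : 0 < ρ - a := sub_pos.2 haρ
  have hρa' : (√(ρ - a) - √(ρ - a')) ^ 2 ≤ (a - a') ^ 2 / (ρ - a) := by
    convert sq_sqrt_sub_sqrt_le_div hρa (sub_nonneg.2 ha'ρ) using 2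
    ring
  rw [syncCost, Real.sq_sqrt ha.le, Real.sq_sqrt ha']
  calc _ ≤ (a - a') ^ 2 / a + (a - a') ^ 2 / (ρ - a) :=
        add_le_add (sq_sqrt_sub_sqrt_le_div ha ha') hρa'
    _ = (a - a') ^ 2 / (a * (1 - a / ρ)) := by
        have : ρ ≠ 0 := (ha.trans haρ).ne'
        field_simp
        ring

theorem syncCost_zero_sqrt_le {a' ρ : ℝ} (ha' : 0 ≤ a') (ha'ρ : a' ≤ ρ) :
    syncCost 0 √a' ρ ≤ 2 * a' := by
  have := sq_sqrt_sub_sqrt_le_sub (sub_nonneg.2 ha'ρ) (sub_le_self ρ ha')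
  rw [syncCost, zero_sub, neg_sq, Real.sq_sqrt ha', zero_pow two_ne_zero, sub_zero]
  linarith

end MicrocanonicalCoupling

open MicrocanonicalCoupling in
theorem stmt14_general (N : ℕ) (hN : 0 < N) (hN2 : 2 ≤ N) (J ρ : ℝ) (hJ : 0 < J)
    (ε ε' : ℝ) (hε : ε ∈ Set.Ioc (-(ρ * J) / 2) 0) (hε' : ε' ∈ Set.Ioc (-(ρ * J) / 2) 0)
    (U : Matrix (Fin N) (Fin N) ℝ) (hU : GoodRotation hN U) :
    -- (i) the case `ε ≠ 0`
    (ε ≠ 0 →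
      fluctDist 2 N (mcEnergyZero hN U J ρ ε) (mcEnergyZero hN U J ρ ε') ≤
        (2 / J) * (1 / (Real.sqrt (-2 * ε / J) * Real.sqrt (1 - -2 * ε / (J * ρ)))) *
          |ε - ε'|) ∧
    -- (ii) the case `ε = 0`
    (ε = 0 →
      fluctDist 2 N (mcEnergyZero hN U J ρ 0) (mcEnergyZero hN U J ρ ε') ≤
        (2 / Real.sqrt J) * Real.sqrt |ε'|) := by
  obtain ⟨hερ, hε0⟩ := hε
  obtain ⟨hε'ρ, hε'0⟩ := hε'
  have ha' : 0 ≤ -2 * ε' / J := div_nonneg (by linarith) hJ.le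
  have ha'ρ : -2 * ε' / J ≤ ρ := by rw [div_le_iff₀ hJ]; linarith
  have hdist := fun ε => fluctDist_mcEnergyZero_le hN hN2 hU J ρ ε ε'
  refine ⟨fun hε_ne => ?_, fun _ => ?_⟩
  · have ha : 0 < -2 * ε / J := div_pos (by linarith [hε0.lt_of_ne hε_ne]) hJ
    have haρ : -2 * ε / J < ρ := by rw [div_lt_iff₀ hJ]; linarith
    have hdiff : |-2 * ε / J - -2 * ε' / J| = 2 / J * |ε - ε'| := by
      rw [show -2 * ε / J - -2 * ε' / J = 2 / J * (ε' - ε) by ring, abs_mul,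
        abs_of_pos (by positivity), abs_sub_comm]
    have h1 : 0 ≤ 1 - -2 * ε / J / ρ := by
      rw [sub_nonneg, div_le_one (ha.trans haρ)]; exact haρ.le
    refine (hdist ε).trans ((Real.sqrt_le_sqrt (syncCost_sqrt_le ha haρ ha' ha'ρ)).trans_eq ?_)
    rw [Real.sqrt_div' _ (mul_nonneg ha.le h1), Real.sqrt_sq_eq_abs, Real.sqrt_mul ha.le, hdiff,
      div_div]
    ring
  · have hsq : 2 * (-2 * ε' / J) = 2 ^ 2 * |ε'| / J := by
      rw [abs_of_nonpos hε'0]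
      ring
    refine (hdist 0).trans ?_
    rw [mul_zero, zero_div, Real.sqrt_zero]
    refine (Real.sqrt_le_sqrt (syncCost_zero_sqrt_le ha' ha'ρ)).trans_eq ?_
    rw [hsq, Real.sqrt_div' _ hJ.le, Real.sqrt_mul (by positivity), Real.sqrt_sq zero_le_two]
    ring

theorem stmt14 (N : ℕ) (hN : 0 < N) (hN2 : 2 ≤ N) (J ρ : ℝ) (hJ : 0 < J) (hρ : 0 < ρ)
    (ε ε' : ℝ) (hε : ε ∈ Set.Ioc (-(ρ * J) / 2) 0) (hε' : ε' ∈ Set.Ioc (-(ρ * J) / 2) 0)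
    (U : Matrix (Fin N) (Fin N) ℝ) (hU : GoodRotation hN U) :
    -- (i) the case `ε ≠ 0`
    (ε ≠ 0 →
      fluctDist 2 N (mcEnergyZero hN U J ρ ε) (mcEnergyZero hN U J ρ ε') ≤
        (2 / J) * (1 / (Real.sqrt (-2 * ε / J) * Real.sqrt (1 - -2 * ε / (J * ρ)))) *
          |ε - ε'|) ∧
    -- (ii) the case `ε = 0`
    (ε = 0 →
      fluctDist 2 N (mcEnergyZero hN U J ρ 0) (mcEnergyZero hN U J ρ ε') ≤
        (2 / Real.sqrt J) * Real.sqrt |ε'|) :=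
  stmt14_general N hN hN2 J ρ hJ ε ε' hε hε' U hU
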